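/- Let K, M be positive integers with M ≤ K, let 1 ≤ W ≤ M, and let the K nodes be partitioned into W nonempty groups with largest group size ℓ. Set w = ℓ + 1, let p be a prime with p ≥ max{w, 2W−2}, and let q be an integer coprime with both p and 2W satisfying q ≥ 2w−1. Then there exists an (M,K,L)-schedule sequence set with respect to this partition, with period L = 2Wpq. (The set is produced by Construction *, which builds each node's sequence from a 2W × pq array whose rows are CRT-UI sequences shifted by pre-assigned offsets δ_m determined by Φ_{p,q}(δ_m) = (m−1, 0).) -/

import Mathlib

/-- A schedule symbol for a system with `W` channels: `T m` means "transmit on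
channel `m`" and `R r` means "receive on channel `r`". -/
inductive SchedSym (W : ℕ) where
  | T : Fin W → SchedSym W
  | R : Fin W → SchedSym W
deriving DecidableEq

/-- `IsScheduleSet W K L G s` says that `s` is an `(M,K,L)`-schedule sequence set
(for any number of channels `M ≥ W`) with respect to the partition of the `K` nodes
into the `W` groups given by the group-assignment map `G` (node `i` lies in group
`G i`). Sequences are modeled as `ℕ → SchedSym W`, indexed modulo `L`.

* `own_channel`: a node in group `m` only uses the transmit symbol `T m`;
* `intra`: intra-group requirement (eq. (1) of the paper) for all offsets `τ ∈ Z_L^K`;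
* `inter`: inter-group requirement (eq. (2) of the paper) for all offsets `τ ∈ Z_L^K`. -/
structure IsScheduleSet (W K L : ℕ) (G : Fin K → Fin W)
    (s : Fin K → ℕ → SchedSym W) : Prop where
  own_channel : ∀ (i : Fin K) (t : ℕ) (m : Fin W), s i t = SchedSym.T m → m = G i
  intra : ∀ τ : Fin K → ℕ, (∀ i, τ i < L) → ∀ i j : Fin K, i ≠ j → G i = G j →
    ∃ t < L, s i ((t + τ i) % L) = SchedSym.T (G i) ∧
      s j ((t + τ j) % L) = SchedSym.R (G i) ∧
      ∀ x : Fin K, x ≠ i → x ≠ j → G x = G i → s x ((t + τ x) % L) ≠ SchedSym.T (G i)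
  inter : ∀ τ : Fin K → ℕ, (∀ i, τ i < L) → ∀ i j : Fin K, G i ≠ G j →
    ∃ t < L, s i ((t + τ i) % L) = SchedSym.T (G i) ∧
      s j ((t + τ j) % L) = SchedSym.R (G i) ∧
      ∀ x : Fin K, x ≠ i → G x = G i → s x ((t + τ x) % L) ≠ SchedSym.T (G i)

/-- The size of group `m` under the group-assignment map `G`. -/
def groupSize {W K : ℕ} (G : Fin K → Fin W) (m : Fin W) : ℕ :=
  (Finset.univ.filter (fun i => G i = m)).card

/-!
Identify `Z_L`, `L = 2Wpq`, with `Z_{2W} × Z_p × Z_q` by the Chinese remainder theorem, so that a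
time is a triple (row `c`, value `b`, column `a`). A node of group `m` with label `g ∈ Z_p` (labels
are distinct within a group) transmits exactly at the points with `a < w = ℓ + 1` on the line
`b = g a + δ`, where `δ = 0` on the rows `c < W` and `δ = m` on the rows `c ≥ W`; otherwise it
listens on channel `c mod W`.

Fix the transmitter `i` and the receiver `j`, put `j` on a row listening on the channel of `i`, and
let `i` transmit in one of its `w` columns. Every other node blocks at most one of these columns:
lines of different slopes meet at most once, because `q ≥ 2w - 1` lets the column shift between two
nodes act on their windows without wrap-around, and `w ≤ p`. Only `j` can share the slope of `i`;
if it blocked a column in both halves of the rows, then `2δ = m - n` in `Z_p` with `δ ∈ {0, m}`,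
impossible for distinct channels `m, n < W` since `m + n < 2W - 2 ≤ p`. So at most `ℓ` of the `w`
columns are blocked.

For `p = 2` all groups are singletons and `W ≤ 2`, and a pattern of period `4` works.
-/

open Finset

section Schedules

variable {W K : ℕ} {G : Fin K → Fin W}

theorem isScheduleSet_of_ringHom {L : ℕ} [NeZero L] {R : Type*} [Ring R] (φ : ZMod L →+* R)
    (hφ : Function.Surjective φ) (f : Fin K → R → SchedSym W)
    (hown : ∀ i P m, f i P = .T m → m = G i)
    (hslot : ∀ d : Fin K → R, ∀ i j, i ≠ j → ∃ P, f i P = .T (G i) ∧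
      f j (P + d j) = .R (G i) ∧ ∀ x, x ≠ i → G x = G i → f x (P + d x) ≠ .T (G i)) :
    IsScheduleSet W K L G (fun x n => f x (φ n)) := by
  have key : ∀ τ : Fin K → ℕ, ∀ i j, i ≠ j → ∃ t < L,
      f i (φ ((t + τ i) % L : ℕ)) = .T (G i) ∧ f j (φ ((t + τ j) % L : ℕ)) = .R (G i) ∧
      ∀ x, x ≠ i → G x = G i → f x (φ ((t + τ x) % L : ℕ)) ≠ .T (G i) := by
    intro τ i j hij
    obtain ⟨P, hi, hj, hx⟩ := hslot (fun x => φ (τ x) - φ (τ i)) i j hij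
    obtain ⟨z, hz⟩ := hφ (P - φ (τ i))
    have hpos : ∀ x, φ ((z.val + τ x) % L : ℕ) = P + (φ (τ x) - φ (τ i)) := by
      intro x
      rw [ZMod.natCast_mod, Nat.cast_add, map_add, ZMod.natCast_zmod_val, hz]
      abel
    refine ⟨z.val, z.val_lt, ?_, ?_, fun x hxi hxG => ?_⟩
    · rwa [hpos, sub_self, add_zero]
    · rwa [hpos]
    · rw [hpos]
      exact hx x hxi hxG
  refine ⟨fun i _ m h => hown i _ m h, fun τ _ i j hij _ => ?_, fun τ _ i j hG => ?_⟩
  · obtain ⟨t, ht, hi, hj, hx⟩ := key τ i j hij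
    exact ⟨t, ht, hi, hj, fun x hxi _ hxG => hx x hxi hxG⟩
  · exact key τ i j (ne_of_apply_ne G hG)

theorem injective_of_groupSize_le_one (h : ∀ m, groupSize G m ≤ 1) : Function.Injective G :=
  fun a b hab => card_le_one.1 (h (G b)) a (by simp [hab]) b (by simp)

theorem exists_injective_on_groups {γ : Type*} [Fintype γ]
    (h : ∀ m, groupSize G m ≤ Fintype.card γ) :
    ∃ g : Fin K → γ, ∀ x y, G x = G y → g x = g y → x = y := by
  have e : ∀ m, {x // G x = m} ↪ γ := fun m => Classical.choice <|
    Function.Embedding.nonempty_of_card_le (by rw [Fintype.card_subtype]; exact h m)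
  have he : ∀ m x (hx : G x = m), e (G x) ⟨x, rfl⟩ = e m ⟨x, hx⟩ := by
    rintro _ x rfl
    rfl
  refine ⟨fun x => e (G x) ⟨x, rfl⟩, fun x y hxy hg => ?_⟩
  change e (G x) ⟨x, rfl⟩ = e (G y) ⟨y, rfl⟩ at hg
  rw [he _ x hxy] at hg
  exact congrArg Subtype.val ((e (G y)).injective hg)

end Schedules

theorem exists_lt_forall_not_of_card_lt {ι : Type*} {w : ℕ} (O : Finset ι) (P : ι → ℕ → Prop)
    (hP : ∀ x ∈ O, ∀ α < w, ∀ α' < w, P x α → P x α' → α = α') (hO : O.card < w) :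
    ∃ α < w, ∀ x ∈ O, ¬ P x α := by
  classical
  by_contra! h
  have hcover : range w ⊆ O.biUnion fun x => (range w).filter (P x) := fun α hα => by
    obtain ⟨x, hx, hPx⟩ := h α (mem_range.1 hα)
    exact mem_biUnion.2 ⟨x, hx, mem_filter.2 ⟨hα, hPx⟩⟩
  have := (card_le_card hcover).trans (card_biUnion_le_card_mul _ _ 1 fun x hx =>
    card_le_one.2 fun α hα α' hα' => by
      simp only [mem_filter, mem_range] at hα hα'
      exact hP x hx α hα.1 α' hα'.1 hα.2 hα'.2)
  simp only [card_range, mul_one] at this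
  omega

theorem ZMod.val_add_add_val_eq {q w : ℕ} [NeZero q] (hwq : 2 * w ≤ q + 1) {a a' d : ZMod q}
    (ha : a.val < w) (ha' : a'.val < w) (h : (a + d).val < w) (h' : (a' + d).val < w) :
    (a + d).val + a'.val = (a' + d).val + a.val := by
  have := d.val_lt
  rw [ZMod.val_add, Nat.add_mod_eq_ite, Nat.mod_eq_of_lt a.val_lt, Nat.mod_eq_of_lt d.val_lt]
    at h ⊢
  rw [ZMod.val_add, Nat.add_mod_eq_ite, Nat.mod_eq_of_lt a'.val_lt, Nat.mod_eq_of_lt d.val_lt]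
    at h' ⊢
  split_ifs at h h' ⊢ <;> omega

def pairPattern {W : ℕ} (m : Fin W) (y : ZMod 4) : SchedSym W :=
  if y = 0 ∨ y = (m : ℕ) + 1 then .T m else .R m.rev

theorem pairPattern_exists_slot : ∀ a b : Fin 2, a ≠ b → ∀ v : ZMod 4,
    ∃ P : ZMod 4, pairPattern a P = .T a ∧ pairPattern b (P + v) = .R a := by
  decide

theorem exists_isScheduleSet_of_injective {W K L : ℕ} [NeZero L] {G : Fin K → Fin W}
    (hW : W ≤ 2) (hG : Function.Injective G) (hL : 4 ∣ L) :
    ∃ s, IsScheduleSet W K L G s := by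
  refine ⟨_, isScheduleSet_of_ringHom (ZMod.castHom hL (ZMod 4)) (ZMod.ringHom_surjective _)
    (fun x => pairPattern (G x)) (fun i P m h => ?_) (fun d i j hij => ?_)⟩
  · unfold pairPattern at h
    split_ifs at h
    cases h
    rfl
  · have hGij : G i ≠ G j := hG.ne hij
    obtain rfl : W = 2 := by
      have := Fin.val_ne_of_ne hGij
      omega
    obtain ⟨P, hi, hj⟩ := pairPattern_exists_slot (G i) (G j) hGij (d j)
    exact ⟨P, hi, hj, fun x hxi hxG => absurd (hG hxG) hxi⟩

section Construction

variable {W p q K w : ℕ}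

def rowOffset (m : Fin W) (c : ZMod (2 * W)) : ZMod p := if c.val < W then 0 else (m : ℕ)

def Transmits (w : ℕ) (m : Fin W) (g : ZMod p) (P : ZMod (2 * W) × ZMod p × ZMod q) : Prop :=
  P.2.2.val < w ∧ P.2.1 = g * (P.2.2.val : ZMod p) + rowOffset m P.1

instance (w : ℕ) (m : Fin W) (g : ZMod p) (P : ZMod (2 * W) × ZMod p × ZMod q) :
    Decidable (Transmits w m g P) :=
  inferInstanceAs (Decidable (_ ∧ _))

def linePoint (m : Fin W) (g : ZMod p) (c : ZMod (2 * W)) (α : ℕ) :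
    ZMod (2 * W) × ZMod p × ZMod q :=
  (c, g * (α : ZMod p) + rowOffset m c, (α : ZMod q))

theorem rowOffset_natCast_val (m n : Fin W) :
    rowOffset m ((n : ℕ) : ZMod (2 * W)) = (0 : ZMod p) := by
  rw [rowOffset, ZMod.val_cast_of_lt (by omega), if_pos n.isLt]

theorem two_mul_rowOffset_ne [NeZero p] (hpW : 2 * W - 2 ≤ p) {m n : Fin W} (hmn : m ≠ n)
    (c : ZMod (2 * W)) : 2 * rowOffset m c ≠ ((m : ℕ) - (n : ℕ) : ZMod p) := by
  have hmn' := Fin.val_ne_of_ne hmn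
  unfold rowOffset
  split_ifs
  · rw [mul_zero, ne_comm, sub_ne_zero, Ne, ZMod.natCast_eq_natCast_iff',
      Nat.mod_eq_of_lt (by omega), Nat.mod_eq_of_lt (by omega)]
    exact hmn'
  · intro h
    have hsum : ((m + n : ℕ) : ZMod p) = 0 := by
      push_cast
      linear_combination h
    rw [ZMod.natCast_eq_zero_iff] at hsum
    exact absurd (Nat.le_of_dvd (by omega) hsum) (by omega)

theorem transmits_linePoint (hwq : 2 * w ≤ q + 1) {α : ℕ} (hα : α < w) (m : Fin W) (g : ZMod p)
    (c : ZMod (2 * W)) : Transmits w m g (linePoint m g c α : ZMod (2 * W) × ZMod p × ZMod q) := by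
  have hval : ((α : ZMod q)).val = α := ZMod.val_cast_of_lt (by omega)
  exact ⟨by simp only [linePoint, hval, hα], by simp only [linePoint, hval]⟩

theorem Transmits.sub_mul_sub [NeZero q] (hwq : 2 * w ≤ q + 1) {α α' : ℕ} (hα : α < w)
    (hα' : α' < w)
    {m m' : Fin W} {g g' : ZMod p} {c₁ c₂ : ZMod (2 * W)} {d : ZMod (2 * W) × ZMod p × ZMod q}
    (h₁ : Transmits w m' g' (linePoint m g c₁ α + d))
    (h₂ : Transmits w m' g' (linePoint m g c₂ α' + d)) :
    (g - g') * ((α : ZMod p) - (α' : ZMod p)) =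
      rowOffset m c₂ - rowOffset m c₁ + rowOffset m' (c₁ + d.1) - rowOffset m' (c₂ + d.1) := by
  obtain ⟨hcol₁, heq₁⟩ := h₁
  obtain ⟨hcol₂, heq₂⟩ := h₂
  simp only [linePoint, Prod.fst_add, Prod.snd_add] at hcol₁ hcol₂ heq₁ heq₂
  have hval : ∀ β, β < w → ((β : ZMod q)).val = β := fun β hβ => ZMod.val_cast_of_lt (by omega)
  have hshift := ZMod.val_add_add_val_eq hwq (by rwa [hval α hα]) (by rwa [hval α' hα'])
    hcol₁ hcol₂
  rw [hval α hα, hval α' hα'] at hshift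
  have hshift' := congrArg (Nat.cast : ℕ → ZMod p) hshift
  push_cast at hshift'
  linear_combination heq₁ - heq₂ + g' * hshift'

theorem Transmits.eq_of_ne [NeZero q] [Fact p.Prime] (hwp : w ≤ p) (hwq : 2 * w ≤ q + 1)
    {α α' : ℕ} (hα : α < w) (hα' : α' < w) {m m' : Fin W} {g g' : ZMod p} (hg : g ≠ g')
    {c : ZMod (2 * W)} {d : ZMod (2 * W) × ZMod p × ZMod q}
    (h₁ : Transmits w m' g' (linePoint m g c α + d))
    (h₂ : Transmits w m' g' (linePoint m g c α' + d)) : α = α' := by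
  have h : (g - g') * ((α : ZMod p) - (α' : ZMod p)) = 0 := by
    rw [Transmits.sub_mul_sub hwq hα hα' h₁ h₂]
    ring
  rcases mul_eq_zero.1 h with h | h
  · exact absurd (sub_eq_zero.1 h) hg
  · have := (ZMod.natCast_eq_natCast_iff' α α' p).1 (sub_eq_zero.1 h)
    rwa [Nat.mod_eq_of_lt (by omega), Nat.mod_eq_of_lt (by omega)] at this

variable [NeZero W]

theorem val_natCast_half : ((W : ℕ) : ZMod (2 * W)).val = W :=
  ZMod.val_cast_of_lt (by have := NeZero.pos W; omega)

theorem rowOffset_add_half (m : Fin W) (c : ZMod (2 * W)) :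
    rowOffset m (c + (W : ZMod (2 * W))) = ((m : ℕ) : ZMod p) - rowOffset m c := by
  have hc := c.val_lt
  unfold rowOffset
  rw [ZMod.val_add, val_natCast_half]
  by_cases h : c.val < W
  · rw [Nat.mod_eq_of_lt (by omega), if_neg (by omega), if_pos h, sub_zero]
  · rw [Nat.mod_eq_sub_mod (by omega), Nat.mod_eq_of_lt (by omega), if_pos (by omega), if_neg h,
      sub_self]

def channel (c : ZMod (2 * W)) : Fin W := ⟨c.val % W, Nat.mod_lt _ (NeZero.pos W)⟩

theorem channel_natCast_val (m : Fin W) : channel ((m : ℕ) : ZMod (2 * W)) = m := by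
  ext
  simp only [channel, ZMod.val_natCast, Nat.mod_mod_of_dvd _ (dvd_mul_left W 2),
    Nat.mod_eq_of_lt m.isLt]

theorem channel_add_half (c : ZMod (2 * W)) : channel (c + (W : ZMod (2 * W))) = channel c := by
  ext
  simp only [channel, ZMod.val_add, val_natCast_half, Nat.mod_mod_of_dvd _ (dvd_mul_left W 2),
    Nat.add_mod_right]

def starSym (w : ℕ) (m : Fin W) (g : ZMod p) (P : ZMod (2 * W) × ZMod p × ZMod q) :
    SchedSym W :=
  if Transmits w m g P then .T m else .R (channel P.1)

theorem starSym_eq_T {m m' : Fin W} {g : ZMod p} {P : ZMod (2 * W) × ZMod p × ZMod q}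
    (h : starSym w m g P = .T m') : m' = m := by
  unfold starSym at h
  split_ifs at h
  cases h
  rfl

variable [NeZero q] [Fact p.Prime]

theorem exists_row (hwp : w ≤ p) (hwq : 2 * w ≤ q + 1) (hpW : 2 * W - 2 ≤ p)
    {m n : Fin W} {g g' : ZMod p} (hsame : g = g' → m ≠ n) (d : ZMod (2 * W) × ZMod p × ZMod q) :
    ∃ c : ZMod (2 * W), channel (c + d.1) = m ∧
      ∀ α < w, ∀ α' < w, Transmits w n g' (linePoint m g c α + d) →
        Transmits w n g' (linePoint m g c α' + d) → α = α' := by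
  obtain ⟨c₀, hc₀⟩ : ∃ c : ZMod (2 * W), c + d.1 = (m : ℕ) := ⟨_, sub_add_cancel _ _⟩
  have hch₀ : channel (c₀ + d.1) = m := by rw [hc₀, channel_natCast_val]
  by_cases hg : g = g'
  · by_cases h₀ : ∃ α < w, Transmits w n g' (linePoint m g c₀ α + d)
    · obtain ⟨α, hα, hα₀⟩ := h₀
      have hc₁ : c₀ + W + d.1 = (m : ℕ) + (W : ZMod (2 * W)) := by rw [add_right_comm, hc₀]
      refine ⟨c₀ + W, by rw [hc₁, channel_add_half, channel_natCast_val],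
        fun α' hα' _ _ h₁ _ => absurd ?_ (two_mul_rowOffset_ne hpW (hsame hg) c₀)⟩
      have key := Transmits.sub_mul_sub hwq hα hα' hα₀ h₁
      rw [hg, sub_self, zero_mul, hc₀, hc₁, rowOffset_add_half, rowOffset_add_half,
        rowOffset_natCast_val] at key
      linear_combination key
    · exact ⟨c₀, hch₀, fun α hα _ _ h₁ _ => absurd ⟨α, hα, h₁⟩ h₀⟩
  · exact ⟨c₀, hch₀, fun α hα α' hα' => Transmits.eq_of_ne hwp hwq hα hα' hg⟩

variable {G : Fin K → Fin W} {g : Fin K → ZMod p}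

theorem exists_slot (hwp : w ≤ p) (hwq : 2 * w ≤ q + 1) (hpW : 2 * W - 2 ≤ p)
    (hG : ∀ m, groupSize G m < w) (hg : ∀ x y, G x = G y → g x = g y → x = y)
    (d : Fin K → ZMod (2 * W) × ZMod p × ZMod q) {i j : Fin K} (hij : i ≠ j) :
    ∃ P, starSym w (G i) (g i) P = .T (G i) ∧ starSym w (G j) (g j) (P + d j) = .R (G i) ∧
      ∀ x, x ≠ i → G x = G i → starSym w (G x) (g x) (P + d x) ≠ .T (G i) := by
  classical
  obtain ⟨c, hch, hj⟩ := exists_row hwp hwq hpW (g' := g j)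
    (fun hgij hGij => hij (hg i j hGij hgij)) (d j)
  set O := insert j ((univ.filter fun x => G x = G i).erase i)
  have hO : O.card < w := calc
    O.card ≤ ((univ.filter fun x => G x = G i).erase i).card + 1 := card_insert_le _ _
    _ = groupSize G (G i) := card_erase_add_one (by simp)
    _ < w := hG (G i)
  have hcollide : ∀ x ∈ O, ∀ α < w, ∀ α' < w,
      Transmits w (G x) (g x) (linePoint (G i) (g i) c α + d x) →
      Transmits w (G x) (g x) (linePoint (G i) (g i) c α' + d x) → α = α' := by
    intro x hx
    rcases mem_insert.1 hx with rfl | hx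
    · exact hj
    · obtain ⟨hxi, hxG⟩ : x ≠ i ∧ G x = G i := by simpa using hx
      exact fun α hα α' hα' => Transmits.eq_of_ne hwp hwq hα hα'
        (fun hgx => hxi (hg x i hxG hgx.symm))
  obtain ⟨α, hα, hfree⟩ := exists_lt_forall_not_of_card_lt O _ hcollide hO
  refine ⟨linePoint (G i) (g i) c α, ?_, ?_, fun x hxi hxG => ?_⟩
  · rw [starSym, if_pos (transmits_linePoint hwq hα _ _ _)]
  · rw [starSym, if_neg (hfree j (mem_insert_self _ _))]
    exact congrArg SchedSym.R hch
  · rw [starSym, if_neg (hfree x (mem_insert_of_mem (by simp [hxi, hxG])))]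
    nofun

theorem exists_isScheduleSet_starSym (hwp : w ≤ p) (hwq : 2 * w ≤ q + 1) (hpW : 2 * W - 2 ≤ p)
    (h2W : Nat.Coprime (2 * W) (p * q)) (hpq : Nat.Coprime p q)
    (hG : ∀ m, groupSize G m < w) (hg : ∀ x y, G x = G y → g x = g y → x = y) :
    ∃ s, IsScheduleSet W K (2 * W * (p * q)) G s :=
  ⟨_, isScheduleSet_of_ringHom
    ((ZMod.chineseRemainder h2W).trans
      ((RingEquiv.refl _).prodCongr (ZMod.chineseRemainder hpq))).toRingHom
    (RingEquiv.surjective _) (fun x => starSym w (G x) (g x)) (fun _ _ _ => starSym_eq_T)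
    (fun d _ _ hij => exists_slot hwp hwq hpW hG hg d hij)⟩

end Construction

theorem construction_star_exists_general
    (K W ℓ p q : ℕ) (hW : 1 ≤ W)
    (G : Fin K → Fin W)
    (hℓmax : ∀ m : Fin W, groupSize G m ≤ ℓ)
    (hp : p.Prime) (hpw : ℓ + 1 ≤ p) (hpW : 2 * W - 2 ≤ p)
    (hqp : Nat.Coprime q p) (hqW : Nat.Coprime q (2 * W))
    (hq : 2 * (ℓ + 1) - 1 ≤ q) :
    ∃ s : Fin K → ℕ → SchedSym W, IsScheduleSet W K (2 * W * (p * q)) G s := by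
  have : NeZero W := ⟨by omega⟩
  have : NeZero q := ⟨by omega⟩
  rcases eq_or_ne p 2 with rfl | hp2
  · exact exists_isScheduleSet_of_injective (by omega)
      (injective_of_groupSize_le_one fun m => (hℓmax m).trans (by omega)) ⟨W * q, by ring⟩
  have : Fact p.Prime := ⟨hp⟩
  have hp2W : Nat.Coprime p (2 * W) := by
    rw [hp.coprime_iff_not_dvd]
    intro h
    rcases hp.dvd_mul.1 h with h | h
    · exact hp2 ((Nat.prime_dvd_prime_iff_eq hp Nat.prime_two).1 h)
    · exact absurd (Nat.le_of_dvd (by omega) h) (by have := hp.two_le; omega)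
  obtain ⟨g, hg⟩ := exists_injective_on_groups (γ := ZMod p) (G := G)
    fun m => (hℓmax m).trans (by rw [ZMod.card]; omega)
  exact exists_isScheduleSet_starSym hpw (by omega) hpW
    (Nat.Coprime.mul_right hp2W.symm hqW.symm) hqp.symm (fun m => by have := hℓmax m; omega) hg

/-- feasibility of Construction *: let `K, M` be positive integers
with `M ≤ K`, `1 ≤ W ≤ M`, and let the `K` nodes be partitioned into `W` nonempty
groups (given by the surjective assignment `G`) with largest group size `ℓ`. Set
`w = ℓ + 1`, let `p` be a prime with `p ≥ max{w, 2W−2}`, and let `q` be coprime with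
both `p` and `2W` with `q ≥ 2w−1`. Then there exists an `(M,K,L)`-schedule sequence
set with respect to this partition with period `L = 2Wpq`. -/
theorem construction_star_exists
    (K M W ℓ p q : ℕ) (hM : 0 < M) (hMK : M ≤ K) (hW : 1 ≤ W) (hWM : W ≤ M)
    (G : Fin K → Fin W) (hG : Function.Surjective G)
    (hℓmax : ∀ m : Fin W, groupSize G m ≤ ℓ)
    (hℓex : ∃ m : Fin W, groupSize G m = ℓ)
    (hp : p.Prime) (hpw : ℓ + 1 ≤ p) (hpW : 2 * W - 2 ≤ p)
    (hqp : Nat.Coprime q p) (hqW : Nat.Coprime q (2 * W))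
    (hq : 2 * (ℓ + 1) - 1 ≤ q) :
    ∃ s : Fin K → ℕ → SchedSym W, IsScheduleSet W K (2 * W * (p * q)) G s :=
  construction_star_exists_general K W ℓ p q hW G hℓmax hp hpw hpW hqp hqW hq
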